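/- Let X be a compact topological space and ω a continuous closed 1-form on X. Suppose there exists a homotopy h : X × [0,1] → X with h(x,0) = x for all x and ∫_{t ↦ h(x,t)} ω < 0 for every x ∈ X. Then for every N > 0 there exists a homotopy H : X × [0,1] → X with H(x,0) = x and ∫_{t ↦ H(x,t)} ω ≤ −N for every x ∈ X; in other words, the whole space X is N-movable with respect to ω for every N, so cat(X, ω) = 0. -/

import Mathlib

open Set

/-- A continuous closed 1-form on a topological space `X`: a collection of
continuous real-valued functions `f i : U i → ℝ` indexed by an open cover
`{U i}` of `X`, such that on overlaps the differences `f i − f j` are locally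
constant.  (The functions are recorded as total functions `X → ℝ`; only their
restrictions to `U i` matter.) -/
structure ClosedOneForm (X : Type) [TopologicalSpace X] : Type 1 where
  ι : Type
  U : ι → Set X
  isOpen : ∀ i, IsOpen (U i)
  covers : ∀ x : X, ∃ i, x ∈ U i
  f : ι → X → ℝ
  cont : ∀ i, ContinuousOn (f i) (U i)
  locConst : ∀ i j, ∀ x ∈ U i ∩ U j, ∃ W, IsOpen W ∧ x ∈ W ∧
    ∀ y ∈ W ∩ (U i ∩ U j), f i y - f j y = f i x - f j x

namespace ClosedOneForm

variable {X Y : Type} [TopologicalSpace X] [TopologicalSpace Y]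

/-- `r` is a value of the line integral `∫_γ ω` of the closed 1-form `ω` over
the path `γ : [a,b] → X`: there is a partition `a = t₀ ≤ ⋯ ≤ t_n = b` with
`γ([t_m, t_{m+1}]) ⊆ U (idx m)` and
`r = Σ_m (f (idx m) (γ t_{m+1}) − f (idx m) (γ t_m))`. -/
def IsPathIntegral (ω : ClosedOneForm X) (γ : ℝ → X) (a b r : ℝ) : Prop :=
  ∃ (n : ℕ) (t : ℕ → ℝ) (idx : ℕ → ω.ι),
    t 0 = a ∧ t n = b ∧ (∀ m < n, t m ≤ t (m + 1)) ∧
    (∀ m < n, ∀ s ∈ Set.Icc (t m) (t (m + 1)), γ s ∈ ω.U (idx m)) ∧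
    r = ∑ m ∈ Finset.range n, (ω.f (idx m) (γ (t (m + 1))) - ω.f (idx m) (γ (t m)))

open scoped Classical in
/-- The line integral `∫_γ ω` over `γ : [a,b] → X` (its value is independent
of all choices; it is defined, via choice, as the common value computed from
any admissible partition). -/
noncomputable def pathIntegral (ω : ClosedOneForm X) (γ : ℝ → X) (a b : ℝ) : ℝ :=
  if h : ∃ r, ω.IsPathIntegral γ a b r then h.choose else 0

/-- A subset `A ⊆ X` is `N`-movable with respect to `ω` if there is a homotopy
`H : A × [0,1] → X` with `H(a,0) = a` and `∫_{t ↦ H(a,t)} ω ≤ −N` for all `a ∈ A`. -/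
def NMovable (ω : ClosedOneForm X) (A : Set X) (N : ℝ) : Prop :=
  ∃ H : X × ℝ → X, ContinuousOn H (A ×ˢ Set.Icc (0 : ℝ) 1) ∧
    (∀ a ∈ A, H (a, 0) = a) ∧
    ∀ a ∈ A, ω.pathIntegral (fun t => H (a, t)) 0 1 ≤ -N

end ClosedOneForm

/-- The inclusion of `V` into `X` is null-homotopic. -/
def NullhomotopicIn (X : Type) [TopologicalSpace X] (V : Set X) : Prop :=
  ∃ (H : X × ℝ → X) (x₀ : X), ContinuousOn H (V ×ˢ Set.Icc (0 : ℝ) 1) ∧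
    (∀ v ∈ V, H (v, 0) = v) ∧ (∀ v ∈ V, H (v, 1) = x₀)

/-- `cat_X(A) ≤ k`: the subset `A` can be covered by `k` open subsets of `X`,
each null-homotopic in `X`. -/
def CatLE (X : Type) [TopologicalSpace X] (A : Set X) (k : ℕ) : Prop :=
  ∃ V : Fin k → Set X, (∀ i, IsOpen (V i)) ∧ A ⊆ ⋃ i, V i ∧
    ∀ i, NullhomotopicIn X (V i)

/-- `cat_X(A)`, the Lusternik–Schnirelmann category of `A` in `X`. -/
noncomputable def catSet (X : Type) [TopologicalSpace X] (A : Set X) : ℕ :=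
  sInf {k | CatLE X A k}

/-- `cat(X)`, the Lusternik–Schnirelmann category of `X`. -/
noncomputable def catSpace (X : Type) [TopologicalSpace X] : ℕ :=
  catSet X Set.univ

namespace ClosedOneForm

/-- `cat(X, ω)`: the minimal `k` such that for every `N > 0` there is a closed
subset `A ⊆ X`, `N`-movable with respect to `ω`, with `cat_X(X − A) ≤ k`. -/
noncomputable def catForm {X : Type} [TopologicalSpace X] (ω : ClosedOneForm X) : ℕ :=
  sInf {k | ∀ N : ℝ, 0 < N →
    ∃ A : Set X, IsClosed A ∧ ω.NMovable A N ∧ CatLE X Aᶜ k}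

end ClosedOneForm

namespace ClosedOneForm

variable {X Y : Type} [TopologicalSpace X] [TopologicalSpace Y]

/-- The pullback `φ*ω` of a closed 1-form along a continuous map `φ : Y → X`,
given by the cover `{φ⁻¹(U)}` and the functions `f_U ∘ φ`. -/
def pullback (ω : ClosedOneForm X) (φ : Y → X) (hφ : Continuous φ) :
    ClosedOneForm Y where
  ι := ω.ι
  U i := φ ⁻¹' ω.U i
  isOpen i := (ω.isOpen i).preimage hφ
  covers y := ω.covers (φ y)
  f i := ω.f i ∘ φ
  cont i := (ω.cont i).comp hφ.continuousOn (fun _ h => h)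
  locConst := by
    intro i j y hy
    obtain ⟨W, hWo, hxW, hW⟩ := ω.locConst i j (φ y) hy
    exact ⟨φ ⁻¹' W, hWo.preimage hφ, hxW, fun z hz => hW (φ z) hz⟩

/-- The sum `ω₁ + ω₂` of two closed 1-forms on `X`, given on the common
refinement of the two covers by the sums of the local functions. -/
def add (ω₁ ω₂ : ClosedOneForm X) : ClosedOneForm X where
  ι := ω₁.ι × ω₂.ι
  U p := ω₁.U p.1 ∩ ω₂.U p.2
  isOpen p := (ω₁.isOpen p.1).inter (ω₂.isOpen p.2)
  covers x := by
    obtain ⟨i, hi⟩ := ω₁.covers x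
    obtain ⟨j, hj⟩ := ω₂.covers x
    exact ⟨(i, j), hi, hj⟩
  f p x := ω₁.f p.1 x + ω₂.f p.2 x
  cont p := ((ω₁.cont p.1).mono Set.inter_subset_left).add
    ((ω₂.cont p.2).mono Set.inter_subset_right)
  locConst := by
    intro p q x hx
    obtain ⟨W₁, h1o, h1x, h1⟩ := ω₁.locConst p.1 q.1 x ⟨hx.1.1, hx.2.1⟩
    obtain ⟨W₂, h2o, h2x, h2⟩ := ω₂.locConst p.2 q.2 x ⟨hx.1.2, hx.2.2⟩
    refine ⟨W₁ ∩ W₂, h1o.inter h2o, ⟨h1x, h2x⟩, fun y hy => ?_⟩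
    have e1 := h1 y ⟨hy.1.1, hy.2.1.1, hy.2.2.1⟩
    have e2 := h2 y ⟨hy.1.2, hy.2.1.2, hy.2.2.2⟩
    try dsimp only at e1 e2 ⊢
    linarith

/-- The closed 1-form `ω + dg` obtained from `ω` by adding the differential of
a continuous function `g : X → ℝ`, i.e. adding `g|_U` to each local function. -/
def addFun (ω : ClosedOneForm X) (g : X → ℝ) (hg : Continuous g) :
    ClosedOneForm X where
  ι := ω.ι
  U := ω.U
  isOpen := ω.isOpen
  covers := ω.covers
  f i x := ω.f i x + g x
  cont i := (ω.cont i).add hg.continuousOn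
  locConst := by
    intro i j x hx
    obtain ⟨W, hWo, hWx, hW⟩ := ω.locConst i j x hx
    refine ⟨W, hWo, hWx, fun y hy => ?_⟩
    have := hW y hy
    try dsimp only at this ⊢
    linarith

end ClosedOneForm

/-
The value `φ x` of `ω` along the trajectory `t ↦ h (x, t)` depends continuously on `x`:
by the tube lemma one partition of `[0, 1]` is admissible for all trajectories near `x`, and
since local primitives differ by locally constant functions the integral does not depend on the
partition, so near `x` it is a fixed finite sum of continuous functions. By compactness
`φ ≤ -ε` for some `ε > 0`. Running `h` again from the endpoint of the previous run, `n` times,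
gives a deformation of `X` whose trajectories have integral `≤ -n ε ≤ -N` for `n` large; so
`A = X` is `N`-movable for every `N`, and `cat(X, ω) = 0`.
-/

open Set Filter Topology

theorem le_of_forall_lt_le_succ {α : Type*} [Preorder α] {t : ℕ → α} {n : ℕ}
    (ht : ∀ m < n, t m ≤ t (m + 1)) {i j : ℕ} (hij : i ≤ j) (hjn : j ≤ n) : t i ≤ t j := by
  have hmono : Monotone fun m => t (min m n) := monotone_nat_of_le_succ fun m => by
    rcases lt_or_ge m n with hm | hm
    · simpa [min_eq_left hm.le, min_eq_left (Nat.succ_le_of_lt hm)] using ht m hm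
    · simp [min_eq_right hm, min_eq_right (hm.trans m.le_succ)]
  simpa [min_eq_left hjn, min_eq_left (hij.trans hjn)] using hmono hij

noncomputable def concatDeformation {X : Type*} (F G : X × ℝ → X) (p : X × ℝ) : X :=
  if p.2 ≤ 1 / 2 then F (p.1, 2 * p.2) else G (F (p.1, 1), 2 * p.2 - 1)

namespace ClosedOneForm

variable {X : Type} [TopologicalSpace X] {ω : ClosedOneForm X} {γ γ' : ℝ → X} {a b c r r' : ℝ}

theorem f_sub_f_eq_of_mapsTo {u v : ℝ} (huv : u ≤ v) (hγ : ContinuousOn γ (Icc u v))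
    {i j : ω.ι} (hi : MapsTo γ (Icc u v) (ω.U i)) (hj : MapsTo γ (Icc u v) (ω.U j)) :
    ω.f i (γ v) - ω.f j (γ v) = ω.f i (γ u) - ω.f j (γ u) := by
  let g : Icc u v → ℝ := fun s => ω.f i (γ s) - ω.f j (γ s)
  have hg : IsLocallyConstant g := (IsLocallyConstant.iff_eventually_eq g).2 fun s => by
    obtain ⟨W, hWo, hsW, hW⟩ := ω.locConst i j (γ s) ⟨hi s.2, hj s.2⟩
    have hγs : ∀ᶠ y : Icc u v in 𝓝 s, γ y ∈ W :=
      hγ.domRestrict.continuousAt.preimage_mem_nhds (hWo.mem_nhds hsW)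
    exact hγs.mono fun y hy => hW (γ y) ⟨hy, hi y.2, hj y.2⟩
  have : PreconnectedSpace (Icc u v) := isPreconnected_iff_preconnectedSpace.1 isPreconnected_Icc
  exact hg.apply_eq_of_preconnectedSpace ⟨v, huv, le_rfl⟩ ⟨u, le_rfl, huv⟩

theorem mem_Icc_of_partition {t : ℕ → ℝ} {n : ℕ} (ht0 : t 0 = a) (htn : t n = b)
    (hmono : ∀ m < n, t m ≤ t (m + 1)) {m : ℕ} (hm : m ≤ n) : t m ∈ Icc a b :=
  ⟨ht0 ▸ le_of_forall_lt_le_succ hmono m.zero_le hm, htn ▸ le_of_forall_lt_le_succ hmono hm le_rfl⟩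

theorem IsPathIntegral.eq_of_mapsTo (h : ω.IsPathIntegral γ a b r)
    (hγ : ContinuousOn γ (Icc a b)) {i : ω.ι} (hi : MapsTo γ (Icc a b) (ω.U i)) :
    r = ω.f i (γ b) - ω.f i (γ a) := by
  obtain ⟨n, t, idx, ht0, htn, hmono, hmem, rfl⟩ := h
  have hsub : ∀ m < n, Icc (t m) (t (m + 1)) ⊆ Icc a b := fun m hm =>
    Icc_subset_Icc (mem_Icc_of_partition ht0 htn hmono hm.le).1
      (mem_Icc_of_partition ht0 htn hmono hm).2
  have hterm : ∀ m ∈ Finset.range n,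
      ω.f (idx m) (γ (t (m + 1))) - ω.f (idx m) (γ (t m)) =
        ω.f i (γ (t (m + 1))) - ω.f i (γ (t m)) := fun m hm => by
    have hm := Finset.mem_range.1 hm
    have := f_sub_f_eq_of_mapsTo (hmono m hm) (hγ.mono (hsub m hm)) (hmem m hm)
      (hi.mono_left (hsub m hm))
    linarith
  rw [Finset.sum_congr rfl hterm, Finset.sum_range_sub (fun m => ω.f i (γ (t m))), ht0, htn]

theorem IsPathIntegral.split (h : ω.IsPathIntegral γ a b r) (hac : a ≤ c) (hcb : c ≤ b) :
    ∃ r₁ r₂, ω.IsPathIntegral γ a c r₁ ∧ ω.IsPathIntegral γ c b r₂ ∧ r = r₁ + r₂ := by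
  classical
  obtain ⟨n, t, idx, rfl, rfl, hmono, hmem, rfl⟩ := h
  obtain ⟨i₀, hi₀⟩ := ω.covers (γ c)
  -- Clip the partition at `c`; a clipped piece that collapses to `{c}` gets the chart `i₀`.
  refine ⟨_, _,
    ⟨n, fun m => min (t m) c, fun m => if c < t m then i₀ else idx m,
      min_eq_left hac, min_eq_right hcb, fun m hm => min_le_min_right c (hmono m hm),
      fun m hm s hs => ?_, rfl⟩,
    ⟨n, fun m => max (t m) c, fun m => if t (m + 1) < c then i₀ else idx m,
      max_eq_right hac, max_eq_left hcb, fun m hm => max_le_max_right c (hmono m hm),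
      fun m hm s hs => ?_, rfl⟩, ?_⟩
  · have := hmono m hm
    simp only [mem_Icc] at hs ⊢
    split_ifs with hc
    · rwa [le_antisymm (hs.2.trans (min_le_right _ _)) (by grind)]
    · exact hmem m hm s ⟨by grind, hs.2.trans (min_le_left _ _)⟩
  · have := hmono m hm
    simp only [mem_Icc] at hs ⊢
    split_ifs with hc
    · rwa [le_antisymm (by grind) ((le_max_right _ _).trans hs.1)]
    · exact hmem m hm s ⟨(le_max_left _ _).trans hs.1, by grind⟩
  · rw [← Finset.sum_add_distrib]
    refine Finset.sum_congr rfl fun m hm => ?_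
    have := hmono m (Finset.mem_range.1 hm)
    simp only [min_def, max_def]
    split_ifs <;> first | ring1 | (exfalso; linarith)

theorem IsPathIntegral.unique (h : ω.IsPathIntegral γ a b r) (h' : ω.IsPathIntegral γ a b r')
    (hγ : ContinuousOn γ (Icc a b)) : r = r' := by
  obtain ⟨n, t, idx, rfl, rfl, hmono, hmem, rfl⟩ := h
  induction n generalizing r' with
  | zero =>
    obtain ⟨i, hi⟩ := ω.covers (γ (t 0))
    have hpt : MapsTo γ (Icc (t 0) (t 0)) (ω.U i) := fun s hs => by
      rwa [le_antisymm hs.2 hs.1]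
    simpa using (h'.eq_of_mapsTo hγ hpt).symm
  | succ n ih =>
    have htn : t 0 ≤ t n := le_of_forall_lt_le_succ hmono n.zero_le n.le_succ
    obtain ⟨r₁, r₂, h₁, h₂, rfl⟩ := h'.split htn (hmono n n.lt_succ_self)
    rw [Finset.sum_range_succ,
      ih h₁ (hγ.mono (Icc_subset_Icc_right (hmono n n.lt_succ_self)))
        (fun m hm => hmono m (hm.trans n.lt_succ_self))
        (fun m hm => hmem m (hm.trans n.lt_succ_self)),
      h₂.eq_of_mapsTo (hγ.mono (Icc_subset_Icc_left htn)) (hmem n n.lt_succ_self)]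

theorem pathIntegral_eq (h : ω.IsPathIntegral γ a b r) (hγ : ContinuousOn γ (Icc a b)) :
    ω.pathIntegral γ a b = r := by
  have hex : ∃ r, ω.IsPathIntegral γ a b r := ⟨r, h⟩
  rw [pathIntegral, dif_pos hex]
  exact hex.choose_spec.unique h hγ

theorem isPathIntegral_pathIntegral_of_ne_zero (h : ω.pathIntegral γ a b ≠ 0) :
    ω.IsPathIntegral γ a b (ω.pathIntegral γ a b) := by
  by_cases hex : ∃ r, ω.IsPathIntegral γ a b r
  · rw [pathIntegral, dif_pos hex]
    exact hex.choose_spec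
  · exact absurd (by rw [pathIntegral, dif_neg hex]) h

theorem IsPathIntegral.congr (h : ω.IsPathIntegral γ a b r) (hγ : EqOn γ γ' (Icc a b)) :
    ω.IsPathIntegral γ' a b r := by
  obtain ⟨n, t, idx, ht0, htn, hmono, hmem, rfl⟩ := h
  have hmem' : ∀ {m}, m ≤ n → t m ∈ Icc a b := mem_Icc_of_partition ht0 htn hmono
  refine ⟨n, t, idx, ht0, htn, hmono, fun m hm s hs => ?_, Finset.sum_congr rfl fun m hm => ?_⟩
  · rw [← hγ (Icc_subset_Icc (hmem' hm.le).1 (hmem' hm).2 hs)]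
    exact hmem m hm s hs
  · have hm := Finset.mem_range.1 hm
    rw [hγ (hmem' hm.le), hγ (hmem' hm)]

theorem pathIntegral_congr (hγ : EqOn γ γ' (Icc a b)) :
    ω.pathIntegral γ a b = ω.pathIntegral γ' a b := by
  have : ω.IsPathIntegral γ a b = ω.IsPathIntegral γ' a b :=
    funext fun _ => propext ⟨fun h => h.congr hγ, fun h => h.congr hγ.symm⟩
  rw [pathIntegral, pathIntegral, this]

theorem IsPathIntegral.comp_mul_add {k d a' b' : ℝ} (h : ω.IsPathIntegral γ a' b' r)
    (hk : 0 < k) (ha : k * a + d = a') (hb : k * b + d = b') :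
    ω.IsPathIntegral (fun s => γ (k * s + d)) a b r := by
  obtain ⟨n, t, idx, ht0, htn, hmono, hmem, rfl⟩ := h
  have hinv : ∀ u, k * ((u - d) / k) + d = u := fun u => by field_simp; ring
  refine ⟨n, fun m => (t m - d) / k, idx, ?_, ?_, fun m hm => ?_, fun m hm s hs => ?_, ?_⟩
  · simp only [ht0, ← ha]; field_simp; ring
  · simp only [htn, ← hb]; field_simp; ring
  · exact div_le_div_of_nonneg_right (by linarith [hmono m hm]) hk.le
  · refine hmem m hm _ ⟨?_, ?_⟩
    · have := (div_le_iff₀ hk).1 hs.1; linarith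
    · have := (le_div_iff₀ hk).1 hs.2; linarith
  · simp only [hinv]

theorem IsPathIntegral.snoc {i : ω.ι} (h : ω.IsPathIntegral γ a c r) (hcb : c ≤ b)
    (hi : MapsTo γ (Icc c b) (ω.U i)) :
    ω.IsPathIntegral γ a b (r + (ω.f i (γ b) - ω.f i (γ c))) := by
  classical
  obtain ⟨n, t, idx, ht0, rfl, hmono, hmem, rfl⟩ := h
  refine ⟨n + 1, fun m => if m ≤ n then t m else b, Function.update idx n i,
    by simpa using ht0, by simp, fun m hm => ?_, fun m hm s hs => ?_, ?_⟩
  · rcases (Nat.lt_succ_iff.1 hm).lt_or_eq with hm | rfl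
    · simpa [hm.le, Nat.succ_le_of_lt hm] using hmono m hm
    · simpa using hcb
  · rcases (Nat.lt_succ_iff.1 hm).lt_or_eq with hm | rfl
    · have hs' : s ∈ Icc (t m) (t (m + 1)) := by simpa [hm.le, Nat.succ_le_of_lt hm] using hs
      simpa [hm.ne] using hmem m hm s hs'
    · simpa using hi (by simpa using hs)
  · rw [Finset.sum_range_succ]
    congr 1
    · refine Finset.sum_congr rfl fun m hm => ?_
      have hm := Finset.mem_range.1 hm
      simp [hm.le, Nat.succ_le_of_lt hm, hm.ne]
    · simp

theorem IsPathIntegral.trans {r₁ r₂ : ℝ} (h₁ : ω.IsPathIntegral γ a c r₁)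
    (h₂ : ω.IsPathIntegral γ c b r₂) : ω.IsPathIntegral γ a b (r₁ + r₂) := by
  obtain ⟨n, t, idx, rfl, rfl, hmono, hmem, rfl⟩ := h₂
  induction n with
  | zero => simpa using h₁
  | succ n ih =>
    rw [Finset.sum_range_succ, ← add_assoc]
    exact (ih (fun m hm => hmono m (hm.trans n.lt_succ_self))
      (fun m hm => hmem m (hm.trans n.lt_succ_self))).snoc (hmono n n.lt_succ_self)
      (hmem n n.lt_succ_self)

theorem continuous_pathIntegral {F : X × ℝ → X} (hF : Continuous F)
    (hex : ∀ x, ∃ r, ω.IsPathIntegral (fun t => F (x, t)) a b r) :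
    Continuous fun x => ω.pathIntegral (fun t => F (x, t)) a b := by
  refine continuous_iff_continuousAt.2 fun x₀ => ?_
  obtain ⟨r, n, t, idx, ht0, htn, hmono, hmem, -⟩ := hex x₀
  have hF' : ∀ s, Continuous fun x => F (x, s) := fun s => by fun_prop
  -- By the tube lemma the partition that works for `x₀` works for all nearby `x`.
  have hnear : ∀ᶠ x in 𝓝 x₀, ∀ m ∈ Finset.range n,
      ∀ s ∈ Icc (t m) (t (m + 1)), F (x, s) ∈ ω.U (idx m) :=
    (Finset.eventually_all _).2 fun m hm =>
      isCompact_Icc.eventually_forall_of_forall_eventually fun s hs =>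
        hF.continuousAt.preimage_mem_nhds
          ((ω.isOpen _).mem_nhds (hmem m (Finset.mem_range.1 hm) s hs))
  have hsum : (fun x => ∑ m ∈ Finset.range n,
      (ω.f (idx m) (F (x, t (m + 1))) - ω.f (idx m) (F (x, t m)))) =ᶠ[𝓝 x₀]
      fun x => ω.pathIntegral (fun t => F (x, t)) a b :=
    hnear.mono fun x hx => (pathIntegral_eq ⟨n, t, idx, ht0, htn, hmono,
      fun m hm => hx m (Finset.mem_range.2 hm), rfl⟩
      (by fun_prop : Continuous fun s => F (x, s)).continuousOn).symm
  refine ContinuousAt.congr (tendsto_finsetSum _ fun m hm => ?_) hsum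
  have hm := Finset.mem_range.1 hm
  have hfc : ∀ s ∈ Icc (t m) (t (m + 1)), ContinuousAt (fun x => ω.f (idx m) (F (x, s))) x₀ :=
    fun s hs => ContinuousAt.comp (f := fun x => F (x, s))
      ((ω.cont _).continuousAt ((ω.isOpen _).mem_nhds (hmem m hm s hs))) (hF' s).continuousAt
  exact (hfc _ ⟨hmono m hm, le_rfl⟩).sub (hfc _ ⟨le_rfl, hmono m hm⟩)

variable (ω) in
structure DescendsBy (F : X × ℝ → X) (c : ℝ) : Prop where
  continuous : Continuous F
  apply_zero : ∀ x, F (x, 0) = x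
  exists_isPathIntegral_le : ∀ x, ∃ r ≤ -c, ω.IsPathIntegral (fun t => F (x, t)) 0 1 r

namespace DescendsBy

variable {F G : X × ℝ → X} {c c' : ℝ}

theorem mono (hF : ω.DescendsBy F c) (hc : c' ≤ c) : ω.DescendsBy F c' where
  continuous := hF.continuous
  apply_zero := hF.apply_zero
  exists_isPathIntegral_le x := by
    obtain ⟨r, hr, h⟩ := hF.exists_isPathIntegral_le x
    exact ⟨r, by linarith, h⟩

theorem pathIntegral_le (hF : ω.DescendsBy F c) (x : X) :
    ω.pathIntegral (fun t => F (x, t)) 0 1 ≤ -c := by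
  obtain ⟨r, hr, h⟩ := hF.exists_isPathIntegral_le x
  rwa [pathIntegral_eq h
    (hF.continuous.comp (continuous_const.prodMk continuous_id)).continuousOn]

theorem nMovable_univ (hF : ω.DescendsBy F c) : ω.NMovable univ c :=
  ⟨F, hF.continuous.continuousOn, fun x _ => hF.apply_zero x, fun x _ => hF.pathIntegral_le x⟩

theorem concat (hF : ω.DescendsBy F c) (hG : ω.DescendsBy G c') :
    ω.DescendsBy (concatDeformation F G) (c + c') where
  continuous := by
    refine Continuous.if_le ?_ ?_ continuous_snd continuous_const fun p hp => ?_
    · exact hF.continuous.comp (by fun_prop)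
    · exact hG.continuous.comp
        ((hF.continuous.comp (continuous_fst.prodMk continuous_const)).prodMk (by fun_prop))
    · simp [hp, hG.apply_zero]
  apply_zero x := by simp [concatDeformation, hF.apply_zero]
  exists_isPathIntegral_le x := by
    obtain ⟨r, hr, hFx⟩ := hF.exists_isPathIntegral_le x
    obtain ⟨r', hr', hGx⟩ := hG.exists_isPathIntegral_le (F (x, 1))
    refine ⟨r + r', by linarith, IsPathIntegral.trans (c := 1 / 2) ?_ ?_⟩
    · refine (hFx.comp_mul_add two_pos (by norm_num) (by norm_num) (d := 0)).congr
        fun s hs => ?_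
      simp only [concatDeformation]
      rw [if_pos hs.2, add_zero]
    · refine (hGx.comp_mul_add two_pos (by norm_num) (by norm_num) (d := -1)).congr
        fun s hs => ?_
      rcases hs.1.lt_or_eq with hs | rfl
      · simp only [concatDeformation]
        rw [if_neg (not_le.2 hs), sub_eq_add_neg]
      · simp [concatDeformation, hG.apply_zero]

theorem exists_succ_mul (hF : ω.DescendsBy F c) (n : ℕ) :
    ∃ G, ω.DescendsBy G ((n + 1) * c) := by
  induction n with
  | zero => exact ⟨F, by simpa using hF⟩
  | succ n ih =>
    obtain ⟨G, hG⟩ := ih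
    exact ⟨_, by simpa [add_mul, add_assoc] using hG.concat hF⟩

theorem exists_of_pos (hF : ω.DescendsBy F c) (hc : 0 < c) (N : ℝ) : ∃ G, ω.DescendsBy G N := by
  obtain ⟨n, hn⟩ := exists_nat_ge (N / c)
  obtain ⟨G, hG⟩ := hF.exists_succ_mul n
  refine ⟨G, hG.mono ?_⟩
  have := (div_le_iff₀ hc).1 hn
  nlinarith

end DescendsBy

theorem exists_descendsBy_of_pathIntegral_neg [CompactSpace X] {F : X × ℝ → X}
    (hF : Continuous F) (hF0 : ∀ x, F (x, 0) = x)
    (hneg : ∀ x, ω.pathIntegral (fun t => F (x, t)) 0 1 < 0) : ∃ c > 0, ω.DescendsBy F c := by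
  have hex : ∀ x, ω.IsPathIntegral (fun t => F (x, t)) 0 1
      (ω.pathIntegral (fun t => F (x, t)) 0 1) :=
    fun x => isPathIntegral_pathIntegral_of_ne_zero (hneg x).ne
  obtain ⟨c, hc, hle⟩ := isCompact_univ.exists_forall_le' (a := 0)
    (continuous_pathIntegral hF fun x => ⟨_, hex x⟩).neg.continuousOn
    fun x _ => neg_pos.2 (hneg x)
  refine ⟨c, hc, hF, hF0, fun x => ⟨_, ?_, hex x⟩⟩
  linarith [show c ≤ -ω.pathIntegral (fun t => F (x, t)) 0 1 from hle x trivial]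

theorem catForm_eq_zero_of_forall_nMovable_univ (h : ∀ N > 0, ω.NMovable univ N) :
    ω.catForm = 0 :=
  Nat.sInf_eq_zero.2 <| Or.inl fun N hN =>
    ⟨univ, isClosed_univ, h N hN, fun i => i.elim0, fun i => i.elim0, by simp, fun i => i.elim0⟩

end ClosedOneForm

open ClosedOneForm

/-- **Iteration of a strictly decreasing deformation.**  Let `X` be a compact
space with a continuous closed 1-form `ω`.  If there is a homotopy
`h : X × [0,1] → X` with `h(x,0) = x` and `∫_{t ↦ h(x,t)} ω < 0` for all `x`,
then for every `N > 0` there is a homotopy `H : X × [0,1] → X` with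
`H(x,0) = x` and `∫_{t ↦ H(x,t)} ω ≤ −N` for all `x`; i.e. `X` itself is
`N`-movable with respect to `ω` for every `N`, and hence `cat(X, ω) = 0`. -/
theorem whole_space_movable_of_decreasing_homotopy
    (X : Type) [TopologicalSpace X] [CompactSpace X]
    (ω : ClosedOneForm X) (h : X × ℝ → X)
    (hcont : ContinuousOn h (Set.univ ×ˢ Set.Icc (0 : ℝ) 1))
    (h0 : ∀ x : X, h (x, 0) = x)
    (hneg : ∀ x : X, ω.pathIntegral (fun t => h (x, t)) 0 1 < 0) :
    (∀ N : ℝ, 0 < N → ∃ H : X × ℝ → X,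
        ContinuousOn H (Set.univ ×ˢ Set.Icc (0 : ℝ) 1) ∧
        (∀ x : X, H (x, 0) = x) ∧
        (∀ x : X, ω.pathIntegral (fun t => H (x, t)) 0 1 ≤ -N)) ∧
      ω.catForm = 0 := by
  let F : X × ℝ → X := fun p => h (p.1, projIcc 0 1 zero_le_one p.2)
  have hF : Continuous F :=
    hcont.comp_continuous (by fun_prop) fun p => ⟨trivial, Subtype.prop _⟩
  have hFh : ∀ x,
      ω.pathIntegral (fun t => F (x, t)) 0 1 = ω.pathIntegral (fun t => h (x, t)) 0 1 :=
    fun x => pathIntegral_congr fun t ht => by simp [F, projIcc_of_mem _ ht]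
  obtain ⟨c, hc, hFc⟩ := exists_descendsBy_of_pathIntegral_neg hF (fun x => by simp [F, h0])
    fun x => hFh x ▸ hneg x
  have hdescent : ∀ N, ∃ H, ω.DescendsBy H N := hFc.exists_of_pos hc
  refine ⟨fun N _ => ?_, catForm_eq_zero_of_forall_nMovable_univ fun N _ => ?_⟩
  · obtain ⟨H, hH⟩ := hdescent N
    exact ⟨H, hH.continuous.continuousOn, hH.apply_zero, hH.pathIntegral_le⟩
  · obtain ⟨H, hH⟩ := hdescent N
    exact hH.nMovable_univ
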